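/- arXiv:2105.06371 — 9 statements merged into one kernel-verified Lean document; each statement's English description precedes it below -/
import Mathlib

section
/- Let A be a real m×n matrix, let S ⊆ ℝⁿ, let x* ∈ S, set y = A x*, and define F(x) = ‖y − A x‖². Suppose A satisfies S-REC(S, γ, δ) with γ > 0, δ ≥ 0, and suppose ‖A v‖ ≤ ρ‖v‖ for all v ∈ ℝⁿ with ρ² ≤ γ. Fix a step size η with 1/(2γ) < η < 1/γ. Let x_t ∈ S, set w_t = x_t + η Aᵀ(y − A x_t), and let x_{t+1} ∈ S satisfy ‖x_{t+1} − w_t‖ ≤ ‖x* − w_t‖. Then F(x_{t+1}) ≤ (1/(ηγ) − 1)·F(x_t) + δ/(ηγ), and moreover 0 < 1/(ηγ) − 1 < 1. -/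
/-!
With `u = x⋆ - xₜ`, `e = x⋆ - xₜ₊₁` and `p = ⟪A e, A u⟫`, the projection property of `xₜ₊₁`
expands to `‖u - e‖² ≤ ‖u‖² - 2ηp`. Multiplying by `γ`, the bound `‖A v‖² ≤ ρ²‖v‖² ≤ γ‖v‖²`
on the left and S-REC on the right give `‖A e‖² ≤ δ + 2(1 - ηγ)p`, and
`p ≤ ‖A e‖‖A u‖ ≤ (‖A e‖² + ‖A u‖²)/2` turns this into `ηγ F(xₜ₊₁) ≤ (1 - ηγ) F(xₜ) + δ`.
-/

open Matrix
open scoped InnerProductSpace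

section Descent

variable {E G : Type*} [NormedAddCommGroup E] [InnerProductSpace ℝ E]

theorem norm_sub_sq_le_of_norm_sub_add_le {xstar x x' g : E}
    (h : ‖x' - (x + g)‖ ≤ ‖xstar - (x + g)‖) :
    ‖x' - x‖ ^ 2 ≤ ‖xstar - x‖ ^ 2 - 2 * ⟪xstar - x', g⟫_ℝ := by
  have hsq : ‖(x' - x) - g‖ ^ 2 ≤ ‖(xstar - x) - g‖ ^ 2 := by
    rw [sub_sub, sub_sub]
    exact pow_le_pow_left₀ (norm_nonneg _) h 2
  have hinner : ⟪xstar - x', g⟫_ℝ = ⟪xstar - x, g⟫_ℝ - ⟪x' - x, g⟫_ℝ := by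
    rw [← inner_sub_left, sub_sub_sub_cancel_right]
  rw [norm_sub_sq_real (x' - x), norm_sub_sq_real (xstar - x)] at hsq
  linarith

variable [FiniteDimensional ℝ E] [NormedAddCommGroup G] [InnerProductSpace ℝ G]
  [FiniteDimensional ℝ G]

theorem descent_of_projected_gradient_step (L : E →ₗ[ℝ] G) {γ δ η : ℝ} (hγ : 0 ≤ γ)
    (hηγ : η * γ ≤ 1) {xstar x x' : E}
    (hupper : ‖L (x' - x)‖ ^ 2 ≤ γ * ‖x' - x‖ ^ 2)
    (hlower : γ * ‖xstar - x‖ ^ 2 - δ ≤ ‖L (xstar - x)‖ ^ 2)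
    (hproj : ‖x' - (x + η • L.adjoint (L (xstar - x)))‖ ≤
      ‖xstar - (x + η • L.adjoint (L (xstar - x)))‖) :
    η * γ * ‖L (xstar - x')‖ ^ 2 ≤ (1 - η * γ) * ‖L (xstar - x)‖ ^ 2 + δ := by
  set a := ‖L (xstar - x')‖
  set b := ‖L (xstar - x)‖
  set p := ⟪L (xstar - x'), L (xstar - x)⟫_ℝ
  have hstep : ‖x' - x‖ ^ 2 ≤ ‖xstar - x‖ ^ 2 - 2 * η * p := by
    have h := norm_sub_sq_le_of_norm_sub_add_le hproj
    rwa [real_inner_smul_right, LinearMap.adjoint_inner_right, ← mul_assoc] at h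
  have hsplit : ‖L (x' - x)‖ ^ 2 = b ^ 2 - 2 * p + a ^ 2 := by
    rw [← sub_sub_sub_cancel_left x x' xstar, map_sub, norm_sub_sq_real, real_inner_comm]
  have hkey : a ^ 2 ≤ δ + 2 * (1 - η * γ) * p := by
    linarith [mul_le_mul_of_nonneg_left hstep hγ]
  have hamgm : p ≤ (a ^ 2 + b ^ 2) / 2 := by
    linarith [real_inner_le_norm (L (xstar - x')) (L (xstar - x)), sq_nonneg (a - b)]
  linarith [mul_le_mul_of_nonneg_left hamgm (sub_nonneg.mpr hηγ)]

end Descent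

theorem Matrix.toEuclideanLin_transpose_eq_adjoint {m n : Type*} [Fintype m] [Fintype n] [DecidableEq m]
    [DecidableEq n] (A : Matrix m n ℝ) :
    Aᵀ.toEuclideanLin = A.toEuclideanLin.adjoint := by
  rw [← Matrix.toEuclideanLin_conjTranspose_eq_adjoint, conjTranspose_eq_transpose_of_trivial]

theorem one_div_mul_sub_one_mem_Ioo {γ η : ℝ} (hγ : 0 < γ) (hη₁ : 1 / (2 * γ) < η)
    (hη₂ : η < 1 / γ) :
    1 / (η * γ) - 1 ∈ Set.Ioo 0 1 := by
  rw [div_lt_iff₀ (by positivity)] at hη₁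
  rw [lt_div_iff₀ hγ] at hη₂
  have hηγ : 0 < η * γ := by linarith
  constructor
  · rw [sub_pos, lt_div_iff₀ hηγ]; linarith
  · rw [sub_lt_iff_lt_add, div_lt_iff₀ hηγ]; linarith

theorem stmt_0_general {m n : ℕ} (A : Matrix (Fin m) (Fin n) ℝ)
    (S : Set (EuclideanSpace ℝ (Fin n)))
    (xstar : EuclideanSpace ℝ (Fin n)) (hxstar : xstar ∈ S)
    (y : EuclideanSpace ℝ (Fin m)) (hy : y = A.toEuclideanLin xstar)
    (F : EuclideanSpace ℝ (Fin n) → ℝ)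
    (hF : ∀ x, F x = ‖y - A.toEuclideanLin x‖ ^ 2)
    (γ δ ρ η : ℝ) (hγ : 0 < γ)
    (hSREC : ∀ x₁ ∈ S, ∀ x₂ ∈ S,
      γ * ‖x₁ - x₂‖ ^ 2 - δ ≤ ‖A.toEuclideanLin (x₁ - x₂)‖ ^ 2)
    (hρ : ∀ v : EuclideanSpace ℝ (Fin n), ‖A.toEuclideanLin v‖ ≤ ρ * ‖v‖)
    (hργ : ρ ^ 2 ≤ γ)
    (hη₁ : 1 / (2 * γ) < η) (hη₂ : η < 1 / γ)
    (xt : EuclideanSpace ℝ (Fin n)) (hxt : xt ∈ S)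
    (wt : EuclideanSpace ℝ (Fin n))
    (hwt : wt = xt + η • Aᵀ.toEuclideanLin (y - A.toEuclideanLin xt))
    (xt1 : EuclideanSpace ℝ (Fin n))
    (hproj : ‖xt1 - wt‖ ≤ ‖xstar - wt‖) :
    F xt1 ≤ (1 / (η * γ) - 1) * F xt + δ / (η * γ) ∧
      0 < 1 / (η * γ) - 1 ∧ 1 / (η * γ) - 1 < 1 := by
  have hresidual : ∀ x, y - A.toEuclideanLin x = A.toEuclideanLin (xstar - x) := fun x => by
    rw [hy, map_sub]
  have hupper : ‖A.toEuclideanLin (xt1 - xt)‖ ^ 2 ≤ γ * ‖xt1 - xt‖ ^ 2 :=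
    calc ‖A.toEuclideanLin (xt1 - xt)‖ ^ 2 ≤ (ρ * ‖xt1 - xt‖) ^ 2 :=
          pow_le_pow_left₀ (norm_nonneg _) (hρ _) 2
      _ ≤ γ * ‖xt1 - xt‖ ^ 2 := by
          rw [mul_pow]; exact mul_le_mul_of_nonneg_right hργ (sq_nonneg _)
  have hη : 0 < η := lt_trans (by positivity) hη₁
  have hηγ : 0 < η * γ := mul_pos hη hγ
  have hdescent := descent_of_projected_gradient_step A.toEuclideanLin hγ.le
    ((lt_div_iff₀ hγ).mp hη₂).le hupper (hSREC xstar hxstar xt hxt)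
    (by rwa [hwt, hresidual, Matrix.toEuclideanLin_transpose_eq_adjoint] at hproj)
  refine ⟨?_, one_div_mul_sub_one_mem_Ioo hγ hη₁ hη₂⟩
  rw [hF, hF, hresidual, hresidual]
  calc ‖A.toEuclideanLin (xstar - xt1)‖ ^ 2
      ≤ ((1 - η * γ) * ‖A.toEuclideanLin (xstar - xt)‖ ^ 2 + δ) / (η * γ) := by
        rwa [le_div_iff₀ hηγ, mul_comm]
    _ = _ := by field_simp

/-- one-step descent for PGD under S-REC, spectral-norm bound
    `‖Av‖ ≤ ρ‖v‖` with `ρ² ≤ γ`, and stepsize `1/(2γ) < η < 1/γ`. -/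
theorem stmt_0 {m n : ℕ} (A : Matrix (Fin m) (Fin n) ℝ)
    (S : Set (EuclideanSpace ℝ (Fin n)))
    (xstar : EuclideanSpace ℝ (Fin n)) (hxstar : xstar ∈ S)
    (y : EuclideanSpace ℝ (Fin m)) (hy : y = A.toEuclideanLin xstar)
    (F : EuclideanSpace ℝ (Fin n) → ℝ)
    (hF : ∀ x, F x = ‖y - A.toEuclideanLin x‖ ^ 2)
    (γ δ ρ η : ℝ) (hγ : 0 < γ) (hδ : 0 ≤ δ)
    (hSREC : ∀ x₁ ∈ S, ∀ x₂ ∈ S,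
      γ * ‖x₁ - x₂‖ ^ 2 - δ ≤ ‖A.toEuclideanLin (x₁ - x₂)‖ ^ 2)
    (hρ : ∀ v : EuclideanSpace ℝ (Fin n), ‖A.toEuclideanLin v‖ ≤ ρ * ‖v‖)
    (hργ : ρ ^ 2 ≤ γ)
    (hη₁ : 1 / (2 * γ) < η) (hη₂ : η < 1 / γ)
    (xt : EuclideanSpace ℝ (Fin n)) (hxt : xt ∈ S)
    (wt : EuclideanSpace ℝ (Fin n))
    (hwt : wt = xt + η • Aᵀ.toEuclideanLin (y - A.toEuclideanLin xt))
    (xt1 : EuclideanSpace ℝ (Fin n)) (hxt1 : xt1 ∈ S)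
    (hproj : ‖xt1 - wt‖ ≤ ‖xstar - wt‖) :
    F xt1 ≤ (1 / (η * γ) - 1) * F xt + δ / (η * γ) ∧
      0 < 1 / (η * γ) - 1 ∧ 1 / (η * γ) - 1 < 1 :=
  stmt_0_general A S xstar hxstar y hy F hF γ δ ρ η hγ hSREC hρ hργ hη₁ hη₂ xt hxt wt hwt xt1 hproj
end

section
/- Let A be a real m×n matrix, let x* ∈ ℝⁿ, set y = A x*, define F(x) = ‖y − A x‖², and fix η > 0. Let x_t ∈ ℝⁿ, set w_t = x_t + η Aᵀ(y − A x_t), and suppose x_{t+1} ∈ ℝⁿ satisfies ‖x_{t+1} − w_t‖² ≤ ‖x* − w_t‖². Then 2⟨x_t − x_{t+1}, Aᵀ(y − A x_t)⟩ ≤ (1/η)‖x* − x_t‖² − (1/η)‖x_{t+1} − x_t‖² − 2 F(x_t). -/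
/-!
Expanding both squared distances to the step `x + η g` cancels the term `η² ‖g‖²`, leaving a
linear inequality in `⟪z - x, g⟫` and `⟪u - x, g⟫`. For the least-squares gradient
`g = Aᵀ (A x* - A x)` one has `⟪x* - x, g⟫ = ‖A (x* - x)‖² = F x`.
-/

open Matrix

open scoped RealInnerProductSpace

section GradientStep

variable {E : Type*} [NormedAddCommGroup E] [InnerProductSpace ℝ E]

theorem norm_sub_add_smul_sq (a x g : E) (η : ℝ) :
    ‖a - (x + η • g)‖ ^ 2 = ‖a - x‖ ^ 2 - 2 * η * ⟪a - x, g⟫ + η ^ 2 * ‖g‖ ^ 2 := by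
  rw [show a - (x + η • g) = (a - x) - η • g by abel, norm_sub_sq_real, real_inner_smul_right,
    norm_smul, mul_pow, Real.norm_eq_abs, sq_abs]
  ring

theorem two_inner_sub_le_of_norm_sub_step_sq_le {η : ℝ} (hη : 0 < η) {x g u z : E}
    (h : ‖z - (x + η • g)‖ ^ 2 ≤ ‖u - (x + η • g)‖ ^ 2) :
    2 * ⟪x - z, g⟫ ≤ 1 / η * ‖u - x‖ ^ 2 - 1 / η * ‖z - x‖ ^ 2 - 2 * ⟪u - x, g⟫ := by
  rw [norm_sub_add_smul_sq, norm_sub_add_smul_sq] at h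
  rw [← neg_sub z x, inner_neg_left]
  field_simp
  linarith

end GradientStep

theorem inner_transpose_toEuclideanLin_self {m n : ℕ} (A : Matrix (Fin m) (Fin n) ℝ)
    (v : EuclideanSpace ℝ (Fin n)) :
    ⟪v, Aᵀ.toEuclideanLin (A.toEuclideanLin v)⟫ = ‖A.toEuclideanLin v‖ ^ 2 := by
  rw [← conjTranspose_eq_transpose_of_trivial, toEuclideanLin_conjTranspose_eq_adjoint,
    LinearMap.adjoint_inner_right, real_inner_self_eq_norm_sq]

/-- inequality from the approximate-projection property
    `‖x_{t+1} − w_t‖² ≤ ‖x* − w_t‖²` with `w_t = x_t + η Aᵀ(y − A x_t)`. -/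
theorem stmt_2 {m n : ℕ} (A : Matrix (Fin m) (Fin n) ℝ)
    (xstar : EuclideanSpace ℝ (Fin n))
    (y : EuclideanSpace ℝ (Fin m)) (hy : y = A.toEuclideanLin xstar)
    (F : EuclideanSpace ℝ (Fin n) → ℝ)
    (hF : ∀ x, F x = ‖y - A.toEuclideanLin x‖ ^ 2)
    (η : ℝ) (hη : 0 < η)
    (xt : EuclideanSpace ℝ (Fin n))
    (wt : EuclideanSpace ℝ (Fin n))
    (hwt : wt = xt + η • Aᵀ.toEuclideanLin (y - A.toEuclideanLin xt))
    (xt1 : EuclideanSpace ℝ (Fin n))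
    (hproj : ‖xt1 - wt‖ ^ 2 ≤ ‖xstar - wt‖ ^ 2) :
    2 * (inner ℝ (xt - xt1) (Aᵀ.toEuclideanLin (y - A.toEuclideanLin xt)) : ℝ) ≤
      (1 / η) * ‖xstar - xt‖ ^ 2 - (1 / η) * ‖xt1 - xt‖ ^ 2 - 2 * F xt := by
  subst hwt
  have hresidual : y - A.toEuclideanLin xt = A.toEuclideanLin (xstar - xt) := by
    rw [hy, map_sub]
  have hstep := two_inner_sub_le_of_norm_sub_step_sq_le hη hproj
  rw [hresidual] at hstep ⊢
  rwa [hF, hresidual, ← inner_transpose_toEuclideanLin_self]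
end

section
/- Let A be a real m×n matrix, let x* ∈ ℝⁿ, set y = A x*, define F(x) = ‖y − A x‖², and fix η > 0. Let x_t ∈ ℝⁿ, set w_t = x_t + η Aᵀ(y − A x_t), and suppose x_{t+1} ∈ ℝⁿ satisfies ‖x_{t+1} − w_t‖² ≤ ‖x* − w_t‖². Then F(x_{t+1}) ≤ (1/η)‖x* − x_t‖² − F(x_t) − ((1/η)‖x_{t+1} − x_t‖² − ‖A x_{t+1} − A x_t‖²). -/
/-!
With `r = y - A x_t = A (x* - x_t)`, the gradient step is `w_t = x_t + η Aᵀ r`, and expanding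
`‖u - w_t‖²` turns the projection inequality `‖x_{t+1} - w_t‖² ≤ ‖x* - w_t‖²` into
`‖x_{t+1} - x_t‖² - 2η⟪r, A (x_{t+1} - x_t)⟫ ≤ ‖x* - x_t‖² - 2η‖r‖²`.
Dividing by `η` and inserting it into the expansion
`F(x_{t+1}) = ‖r - A (x_{t+1} - x_t)‖² = ‖r‖² - 2⟪r, A (x_{t+1} - x_t)⟫ + ‖A (x_{t+1} - x_t)‖²`
gives the bound.
-/

open Matrix

section GradientStep

variable {E F : Type*} [NormedAddCommGroup E] [InnerProductSpace ℝ E]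
  [NormedAddCommGroup F] [InnerProductSpace ℝ F]
  {B : E →ₗ[ℝ] F} {T : F →ₗ[ℝ] E}

theorem norm_sub_add_smul_adjoint_sq (hT : ∀ u v, inner ℝ (T u) v = inner ℝ u (B v))
    (x u : E) (r : F) (η : ℝ) :
    ‖u - (x + η • T r)‖ ^ 2 = ‖u - x‖ ^ 2 - 2 * η * inner ℝ r (B (u - x)) + η ^ 2 * ‖T r‖ ^ 2 := by
  rw [sub_add_eq_sub_sub, norm_sub_sq_real, inner_smul_right, real_inner_comm, hT, norm_smul,
    Real.norm_eq_abs, mul_pow, sq_abs]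
  ring

theorem norm_sq_residual_le_of_projected_gradient_step
    (hT : ∀ u v, inner ℝ (T u) v = inner ℝ u (B v))
    {xstar x x' : E} {η : ℝ} (hη : 0 < η)
    (hproj : ‖x' - (x + η • T (B xstar - B x))‖ ^ 2 ≤ ‖xstar - (x + η • T (B xstar - B x))‖ ^ 2) :
    ‖B xstar - B x'‖ ^ 2 ≤ (1 / η) * ‖xstar - x‖ ^ 2 - ‖B xstar - B x‖ ^ 2 -
      ((1 / η) * ‖x' - x‖ ^ 2 - ‖B x' - B x‖ ^ 2) := by
  set r := B xstar - B x
  rw [norm_sub_add_smul_adjoint_sq hT, norm_sub_add_smul_adjoint_sq hT, map_sub B xstar,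
    real_inner_self_eq_norm_sq] at hproj
  have hdescent : 2 * (‖r‖ ^ 2 - inner ℝ r (B x' - B x)) ≤ (‖xstar - x‖ ^ 2 - ‖x' - x‖ ^ 2) / η := by
    rw [le_div_iff₀ hη, ← map_sub]
    linarith
  have hexpand : ‖B xstar - B x'‖ ^ 2 = ‖r‖ ^ 2 - 2 * inner ℝ r (B x' - B x) + ‖B x' - B x‖ ^ 2 := by
    rw [← norm_sub_sq_real, sub_sub_sub_cancel_right]
  have hdiv : (1 / η) * ‖xstar - x‖ ^ 2 - (1 / η) * ‖x' - x‖ ^ 2 =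
      (‖xstar - x‖ ^ 2 - ‖x' - x‖ ^ 2) / η := by
    ring
  rw [hexpand]
  linarith

end GradientStep

theorem Matrix.inner_toEuclideanLin_transpose {m n : Type*} [Fintype m] [Fintype n]
    [DecidableEq m] [DecidableEq n]
    (A : Matrix m n ℝ) (u : EuclideanSpace ℝ m) (v : EuclideanSpace ℝ n) :
    inner ℝ (Aᵀ.toEuclideanLin u) v = inner ℝ u (A.toEuclideanLin v) := by
  rw [← conjTranspose_eq_transpose_of_trivial, toEuclideanLin_conjTranspose_eq_adjoint,
    LinearMap.adjoint_inner_left]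

/-- the combined per-iteration bound on `F(x_{t+1})`. -/
theorem stmt_3 {m n : ℕ} (A : Matrix (Fin m) (Fin n) ℝ)
    (xstar : EuclideanSpace ℝ (Fin n))
    (y : EuclideanSpace ℝ (Fin m)) (hy : y = A.toEuclideanLin xstar)
    (F : EuclideanSpace ℝ (Fin n) → ℝ)
    (hF : ∀ x, F x = ‖y - A.toEuclideanLin x‖ ^ 2)
    (η : ℝ) (hη : 0 < η)
    (xt : EuclideanSpace ℝ (Fin n))
    (wt : EuclideanSpace ℝ (Fin n))
    (hwt : wt = xt + η • Aᵀ.toEuclideanLin (y - A.toEuclideanLin xt))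
    (xt1 : EuclideanSpace ℝ (Fin n))
    (hproj : ‖xt1 - wt‖ ^ 2 ≤ ‖xstar - wt‖ ^ 2) :
    F xt1 ≤ (1 / η) * ‖xstar - xt‖ ^ 2 - F xt -
      ((1 / η) * ‖xt1 - xt‖ ^ 2 - ‖A.toEuclideanLin xt1 - A.toEuclideanLin xt‖ ^ 2) := by
  subst hy hwt
  rw [hF, hF]
  exact norm_sq_residual_le_of_projected_gradient_step A.inner_toEuclideanLin_transpose hη hproj
end

section
/- Let A be a real m×n matrix, let S ⊆ ℝⁿ, let x* ∈ S, set y = A x*, and define F(x) = ‖y − A x‖². Suppose A satisfies S-REC(S, γ, δ) with γ > 0, δ ≥ 0, ‖A v‖ ≤ ρ‖v‖ for all v with ρ² ≤ γ, and fix η with 1/(2γ) < η < 1/γ. Let (x_t)_{t≥0} be a sequence in S with x_0 ∈ S such that, for every t, x_{t+1} ∈ S satisfies ‖x_{t+1} − (x_t + η Aᵀ(y − A x_t))‖ ≤ ‖x* − (x_t + η Aᵀ(y − A x_t))‖. Then, writing κ = 1/(ηγ) − 1 ∈ (0,1) and δ' = δ/(ηγ), for every T ≥ 0 one has F(x_T)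 ≤ κ^T · F(x_0) + δ'/(1 − κ). -/
open Matrix

/-!
Write `e = A(x* − xₜ)` for the residual and `u = xₜ₊₁ − xₜ`. Squaring the projection condition
and using `⟪Aᵀe, v⟫ = ⟪e, Av⟫` gives `‖u‖² − 2η⟪e, Au⟫ ≤ ‖x* − xₜ‖² − 2η‖e‖²`. Expanding
`F(xₜ₊₁) = ‖e − Au‖²`, bounding `‖Au‖² ≤ ρ²‖u‖² ≤ γ‖u‖²` (the `u`-terms then carry the factor
`γ − 1/η < 0`) and `‖x* − xₜ‖² ≤ (‖e‖² + δ)/γ` by S-REC yields the contraction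
`F(xₜ₊₁) ≤ κ F(xₜ) + δ'`, which unrolls to the claim.
-/

theorem le_pow_mul_add_div_of_le_mul_add (f : ℕ → ℝ) {κ c : ℝ} (hκ₀ : 0 ≤ κ) (hκ₁ : κ < 1)
    (hc : 0 ≤ c) (hrec : ∀ t, f (t + 1) ≤ κ * f t + c) (T : ℕ) :
    f T ≤ κ ^ T * f 0 + c / (1 - κ) := by
  have hκ : 0 < 1 - κ := sub_pos.mpr hκ₁
  induction T with
  | zero => simpa using div_nonneg hc hκ.le
  | succ T ih =>
    have hfix : κ * (c / (1 - κ)) + c = c / (1 - κ) := by field_simp; ring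
    calc f (T + 1) ≤ κ * (κ ^ T * f 0 + c / (1 - κ)) + c := by
          linarith [hrec T, mul_le_mul_of_nonneg_left ih hκ₀]
      _ = κ ^ (T + 1) * f 0 + (κ * (c / (1 - κ)) + c) := by ring
      _ = κ ^ (T + 1) * f 0 + c / (1 - κ) := by rw [hfix]

section ProjectedGradient

variable {E F : Type*} [NormedAddCommGroup E] [InnerProductSpace ℝ E] [FiniteDimensional ℝ E]
  [NormedAddCommGroup F] [InnerProductSpace ℝ F] [FiniteDimensional ℝ F]

theorem LinearMap.sq_norm_sub_le_of_projGradStep (L : E →ₗ[ℝ] F) {xstar x x' : E}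
    {γ δ η : ℝ} (hγ : 0 < γ) (hη : 0 < η) (hηγ : η * γ ≤ 1)
    (hSREC : γ * ‖xstar - x‖ ^ 2 - δ ≤ ‖L (xstar - x)‖ ^ 2)
    (hL : ∀ v, ‖L v‖ ^ 2 ≤ γ * ‖v‖ ^ 2)
    (hstep : ‖x' - (x + η • L.adjoint (L xstar - L x))‖ ≤
      ‖xstar - (x + η • L.adjoint (L xstar - L x))‖) :
    ‖L xstar - L x'‖ ^ 2 ≤ (1 / (η * γ) - 1) * ‖L xstar - L x‖ ^ 2 + δ / (η * γ) := by
  set e := L xstar - L x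
  set u := x' - x
  set w := xstar - x
  have hLw : L w = e := map_sub L xstar x
  have hproj : ‖u‖ ^ 2 - 2 * η * inner ℝ e (L u) ≤ ‖w‖ ^ 2 - 2 * η * ‖e‖ ^ 2 := by
    have hsq := pow_le_pow_left₀ (norm_nonneg _) hstep 2
    rw [show x' - (x + η • L.adjoint e) = u - η • L.adjoint e by simp only [u]; abel,
      show xstar - (x + η • L.adjoint e) = w - η • L.adjoint e by simp only [w]; abel,
      norm_sub_sq_real u, norm_sub_sq_real w, real_inner_smul_right, real_inner_smul_right,
      LinearMap.adjoint_inner_right, LinearMap.adjoint_inner_right, hLw,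
      real_inner_self_eq_norm_sq, real_inner_comm] at hsq
    linarith
  have hresidual : ‖L xstar - L x'‖ ^ 2 = ‖e‖ ^ 2 - 2 * inner ℝ e (L u) + ‖L u‖ ^ 2 := by
    rw [show L xstar - L x' = e - L u by simp only [e, u, map_sub]; abel, norm_sub_sq_real e]
  rw [hLw] at hSREC
  have hηγ₀ : 0 < η * γ := mul_pos hη hγ
  have hcontract : η * γ * ‖L xstar - L x'‖ ^ 2 ≤ (1 - η * γ) * ‖e‖ ^ 2 + δ := by
    rw [hresidual]
    linarith [mul_le_mul_of_nonneg_left hproj hγ.le,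
      mul_le_mul_of_nonneg_left (hL u) hηγ₀.le,
      mul_nonneg (sub_nonneg.mpr hηγ) (mul_nonneg hγ.le (sq_nonneg ‖u‖))]
  calc ‖L xstar - L x'‖ ^ 2 ≤ ((1 - η * γ) * ‖e‖ ^ 2 + δ) / (η * γ) :=
        (le_div_iff₀' hηγ₀).mpr hcontract
    _ = (1 / (η * γ) - 1) * ‖e‖ ^ 2 + δ / (η * γ) := by field_simp

end ProjectedGradient

/-- geometric (linear) convergence of the PGD iterates up to a
    neighborhood: `F(x_T) ≤ κ^T F(x_0) + δ'/(1 − κ)` with `κ = 1/(ηγ) − 1` and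
    `δ' = δ/(ηγ)`. -/
theorem stmt_4 {m n : ℕ} (A : Matrix (Fin m) (Fin n) ℝ)
    (S : Set (EuclideanSpace ℝ (Fin n)))
    (xstar : EuclideanSpace ℝ (Fin n)) (hxstar : xstar ∈ S)
    (y : EuclideanSpace ℝ (Fin m)) (hy : y = A.toEuclideanLin xstar)
    (F : EuclideanSpace ℝ (Fin n) → ℝ)
    (hF : ∀ x, F x = ‖y - A.toEuclideanLin x‖ ^ 2)
    (γ δ ρ η : ℝ) (hγ : 0 < γ) (hδ : 0 ≤ δ)
    (hSREC : ∀ x₁ ∈ S, ∀ x₂ ∈ S,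
      γ * ‖x₁ - x₂‖ ^ 2 - δ ≤ ‖A.toEuclideanLin (x₁ - x₂)‖ ^ 2)
    (hρ : ∀ v : EuclideanSpace ℝ (Fin n), ‖A.toEuclideanLin v‖ ≤ ρ * ‖v‖)
    (hργ : ρ ^ 2 ≤ γ)
    (hη₁ : 1 / (2 * γ) < η) (hη₂ : η < 1 / γ)
    (x : ℕ → EuclideanSpace ℝ (Fin n)) (hxS : ∀ t, x t ∈ S)
    (hstep : ∀ t, ‖x (t + 1) - (x t + η • Aᵀ.toEuclideanLin (y - A.toEuclideanLin (x t)))‖ ≤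
      ‖xstar - (x t + η • Aᵀ.toEuclideanLin (y - A.toEuclideanLin (x t)))‖) :
    ∀ T : ℕ, F (x T) ≤ (1 / (η * γ) - 1) ^ T * F (x 0) +
      (δ / (η * γ)) / (1 - (1 / (η * γ) - 1)) := by
  subst hy
  have hη : 0 < η := (by positivity : (0 : ℝ) < 1 / (2 * γ)).trans hη₁
  have hηγ₁ : η * γ < 1 := (lt_div_iff₀ hγ).mp hη₂
  have hηγ₂ : 1 < 2 * (η * γ) := by
    have := (div_lt_iff₀ (by positivity : (0 : ℝ) < 2 * γ)).mp hη₁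
    linarith
  have hηγ₀ : 0 < η * γ := mul_pos hη hγ
  have hκ₀ : 0 ≤ 1 / (η * γ) - 1 := by rw [sub_nonneg, le_div_iff₀ hηγ₀]; linarith
  have hκ₁ : 1 / (η * γ) - 1 < 1 := by rw [sub_lt_iff_lt_add, div_lt_iff₀ hηγ₀]; linarith
  have hL : ∀ v, ‖A.toEuclideanLin v‖ ^ 2 ≤ γ * ‖v‖ ^ 2 := fun v =>
    calc ‖A.toEuclideanLin v‖ ^ 2 ≤ (ρ * ‖v‖) ^ 2 := pow_le_pow_left₀ (norm_nonneg _) (hρ v) 2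
      _ = ρ ^ 2 * ‖v‖ ^ 2 := mul_pow ρ ‖v‖ 2
      _ ≤ γ * ‖v‖ ^ 2 := mul_le_mul_of_nonneg_right hργ (sq_nonneg _)
  rw [← conjTranspose_eq_transpose_of_trivial, toEuclideanLin_conjTranspose_eq_adjoint]
    at hstep
  simp only [hF]
  exact le_pow_mul_add_div_of_le_mul_add _ hκ₀ hκ₁ (by positivity) fun t =>
    A.toEuclideanLin.sq_norm_sub_le_of_projGradStep hγ hη hηγ₁.le
      (hSREC xstar hxstar (x t) (hxS t)) hL (hstep t)
end

section
/- Let S ⊆ ℝⁿ, let F : ℝⁿ → ℝ be differentiable with gradient ∇F, and suppose F satisfies RSC with constant α > 0 and RSS with constant β ≥ α over S. Let x* ∈ S with ‖∇F(x*)‖ ≤ γ, suppose ‖x − x'‖ ≤ Δ for all x, x' ∈ S, and let ε > 0. Let x_t ∈ S, set w_t = x_t − (1/β)∇F(x_t), and let x_{t+1} ∈ S satisfy ‖x_{t+1} − w_t‖² ≤ ‖x* − w_t‖² + ε. Then F(x_{t+1}) − F(x*) ≤ (β/α − 1)·(F(x_t) − F(x*)) + ((β − α)/α)·γΔ + βε/2.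 -/
/-!
Expanding the square shows that, for the gradient step `w = x - β⁻¹ ∇F(x)`, minimising
`‖y - w‖²` over `y` is the same as minimising the RSS upper model
`⟪∇F(x), y - x⟫ + β/2 ‖y - x‖²`. Hence the ε-projection `x₁` does at most `βε/2` worse on the
model than `x*`; RSS at `(x, x₁)` and RSC at `(x, x*)` then give
`F(x₁) - F(x*) ≤ (β - α)/2 ‖x* - x‖²`, up to `βε/2`. Finally RSC at `(x*, x)` together with
Cauchy–Schwarz bounds `α/2 ‖x* - x‖²` by `F(x) - F(x*) + γΔ`.
-/

open RealInnerProductSpace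

variable {E : Type*} [NormedAddCommGroup E] [InnerProductSpace ℝ E]

lemma mul_norm_sub_gradStep_sq {β : ℝ} (hβ : β ≠ 0) (x g y : E) :
    β / 2 * ‖y - (x - (1 / β) • g)‖ ^ 2 =
      ⟪g, y - x⟫ + β / 2 * ‖y - x‖ ^ 2 + 1 / (2 * β) * ‖g‖ ^ 2 := by
  have hsplit : y - (x - (1 / β) • g) = (y - x) + (1 / β) • g := by abel
  rw [hsplit, norm_add_sq_real, real_inner_smul_right, real_inner_comm, norm_smul, mul_pow,
    Real.norm_eq_abs, sq_abs]
  field_simp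
  ring

lemma upperModel_le_of_approxProj {β ε : ℝ} (hβ : 0 < β) {x g x₁ y : E}
    (hproj : ‖x₁ - (x - (1 / β) • g)‖ ^ 2 ≤ ‖y - (x - (1 / β) • g)‖ ^ 2 + ε) :
    ⟪g, x₁ - x⟫ + β / 2 * ‖x₁ - x‖ ^ 2 ≤ ⟪g, y - x⟫ + β / 2 * ‖y - x‖ ^ 2 + β * ε / 2 := by
  have h := mul_le_mul_of_nonneg_left hproj (by positivity : 0 ≤ β / 2)
  rw [mul_add, mul_norm_sub_gradStep_sq hβ.ne', mul_norm_sub_gradStep_sq hβ.ne'] at h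
  linarith

lemma sub_le_of_approxProj {F : E → ℝ} {α β ε : ℝ} (hβ : 0 < β) {x g x₁ y : E}
    (hRSS : F x₁ - F x - ⟪g, x₁ - x⟫ ≤ β / 2 * ‖x - x₁‖ ^ 2)
    (hRSC : α / 2 * ‖x - y‖ ^ 2 ≤ F y - F x - ⟪g, y - x⟫)
    (hproj : ‖x₁ - (x - (1 / β) • g)‖ ^ 2 ≤ ‖y - (x - (1 / β) • g)‖ ^ 2 + ε) :
    F x₁ - F y ≤ (β - α) / 2 * ‖y - x‖ ^ 2 + β * ε / 2 := by
  have hmodel := upperModel_le_of_approxProj hβ hproj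
  rw [norm_sub_rev] at hRSS hRSC
  linarith

lemma mul_norm_sub_sq_le_of_norm_grad_le {F : E → ℝ} {α γ Δ : ℝ} {x y g : E}
    (hRSC : α / 2 * ‖y - x‖ ^ 2 ≤ F x - F y - ⟪g, x - y⟫)
    (hγ : ‖g‖ ≤ γ) (hΔ : ‖x - y‖ ≤ Δ) :
    α / 2 * ‖y - x‖ ^ 2 ≤ F x - F y + γ * Δ := by
  have hinner : -⟪g, x - y⟫ ≤ γ * Δ := calc
    -⟪g, x - y⟫ ≤ |⟪g, x - y⟫| := neg_le_abs _
    _ ≤ ‖g‖ * ‖x - y‖ := abs_real_inner_le_norm _ _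
    _ ≤ γ * Δ := mul_le_mul hγ hΔ (norm_nonneg _) ((norm_nonneg _).trans hγ)
  linarith

theorem stmt_5_general {n : ℕ} (S : Set (EuclideanSpace ℝ (Fin n)))
    (F : EuclideanSpace ℝ (Fin n) → ℝ)
    (gradF : EuclideanSpace ℝ (Fin n) → EuclideanSpace ℝ (Fin n))
    (α β γ Δ ε : ℝ) (hα : 0 < α) (hβ : α ≤ β)
    (hRSC : ∀ x ∈ S, ∀ y ∈ S,
      α / 2 * ‖x - y‖ ^ 2 ≤ F y - F x - (inner ℝ (gradF x) (y - x) : ℝ))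
    (hRSS : ∀ x ∈ S, ∀ y ∈ S,
      F y - F x - (inner ℝ (gradF x) (y - x) : ℝ) ≤ β / 2 * ‖x - y‖ ^ 2)
    (xstar : EuclideanSpace ℝ (Fin n)) (hxstar : xstar ∈ S)
    (hγ : ‖gradF xstar‖ ≤ γ)
    (hΔ : ∀ x ∈ S, ∀ x' ∈ S, ‖x - x'‖ ≤ Δ)
    (xt : EuclideanSpace ℝ (Fin n)) (hxt : xt ∈ S)
    (wt : EuclideanSpace ℝ (Fin n)) (hwt : wt = xt - (1 / β) • gradF xt)
    (xt1 : EuclideanSpace ℝ (Fin n)) (hxt1 : xt1 ∈ S)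
    (hproj : ‖xt1 - wt‖ ^ 2 ≤ ‖xstar - wt‖ ^ 2 + ε) :
    F xt1 - F xstar ≤ (β / α - 1) * (F xt - F xstar) +
      ((β - α) / α) * (γ * Δ) + β * ε / 2 := by
  subst hwt
  have hgap := sub_le_of_approxProj (hα.trans_le hβ) (hRSS xt hxt xt1 hxt1)
    (hRSC xt hxt xstar hxstar) hproj
  have hdist := mul_norm_sub_sq_le_of_norm_grad_le (hRSC xstar hxstar xt hxt) hγ
    (hΔ xt hxt xstar hxstar)
  have hratio : 0 ≤ (β - α) / α := div_nonneg (sub_nonneg.mpr hβ) hα.le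
  calc F xt1 - F xstar ≤ (β - α) / 2 * ‖xstar - xt‖ ^ 2 + β * ε / 2 := hgap
    _ = (β - α) / α * (α / 2 * ‖xstar - xt‖ ^ 2) + β * ε / 2 := by field_simp
    _ ≤ (β - α) / α * (F xt - F xstar + γ * Δ) + β * ε / 2 := by gcongr
    _ = (β / α - 1) * (F xt - F xstar) + ((β - α) / α) * (γ * Δ) + β * ε / 2 := by
      field_simp

/-- one step of ε-PGD under RSC/RSS yields linear decrease of the
    objective gap, up to the additive error `((β−α)/α)γΔ + βε/2`. -/
theorem stmt_5 {n : ℕ} (S : Set (EuclideanSpace ℝ (Fin n)))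
    (F : EuclideanSpace ℝ (Fin n) → ℝ)
    (gradF : EuclideanSpace ℝ (Fin n) → EuclideanSpace ℝ (Fin n))
    (hgrad : ∀ x, HasGradientAt F (gradF x) x)
    (α β γ Δ ε : ℝ) (hα : 0 < α) (hβ : α ≤ β)
    (hRSC : ∀ x ∈ S, ∀ y ∈ S,
      α / 2 * ‖x - y‖ ^ 2 ≤ F y - F x - (inner ℝ (gradF x) (y - x) : ℝ))
    (hRSS : ∀ x ∈ S, ∀ y ∈ S,
      F y - F x - (inner ℝ (gradF x) (y - x) : ℝ) ≤ β / 2 * ‖x - y‖ ^ 2)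
    (xstar : EuclideanSpace ℝ (Fin n)) (hxstar : xstar ∈ S)
    (hγ : ‖gradF xstar‖ ≤ γ)
    (hΔ : ∀ x ∈ S, ∀ x' ∈ S, ‖x - x'‖ ≤ Δ)
    (hε : 0 < ε)
    (xt : EuclideanSpace ℝ (Fin n)) (hxt : xt ∈ S)
    (wt : EuclideanSpace ℝ (Fin n)) (hwt : wt = xt - (1 / β) • gradF xt)
    (xt1 : EuclideanSpace ℝ (Fin n)) (hxt1 : xt1 ∈ S)
    (hproj : ‖xt1 - wt‖ ^ 2 ≤ ‖xstar - wt‖ ^ 2 + ε) :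
    F xt1 - F xstar ≤ (β / α - 1) * (F xt - F xstar) +
      ((β - α) / α) * (γ * Δ) + β * ε / 2 :=
  stmt_5_general S F gradF α β γ Δ ε hα hβ hRSC hRSS xstar hxstar hγ hΔ xt hxt wt hwt xt1 hxt1 hproj
end

section
/- Let S ⊆ ℝⁿ, let F : ℝⁿ → ℝ be differentiable with gradient ∇F, and suppose F satisfies RSS with constant β > 0 over S. Let x*, x_t ∈ S, let ε ≥ 0, set w_t = x_t − (1/β)∇F(x_t), and let x_{t+1} ∈ S satisfy ‖x_{t+1} − w_t‖² ≤ ‖x* − w_t‖² + ε. Then F(x_{t+1}) − F(x_t) ≤ (β/2)‖x* − x_t‖² + ⟨∇F(x_t), x* − x_t⟩ + βε/2. -/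
/-!
Expanding the square shows that the RSS upper model `⟪∇F(x), y - x⟫ + (β/2)‖y - x‖²` equals
`(β/2)‖y - w‖² - ‖∇F(x)‖²/(2β)` with `w = x - (1/β)∇F(x)`. Applying RSS between `x_t` and `x_{t+1}`,
the approximate projection inequality replaces `x_{t+1}` by `x*` in this model up to `βε/2`,
and reading the identity backwards at `x*` gives the bound.
-/

theorem inner_add_half_mul_norm_sq_eq {E : Type*} [NormedAddCommGroup E] [InnerProductSpace ℝ E]
    {β : ℝ} (hβ : β ≠ 0) (g x y : E) :
    inner ℝ g (y - x) + β / 2 * ‖y - x‖ ^ 2 =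
      β / 2 * ‖y - (x - (1 / β) • g)‖ ^ 2 - ‖g‖ ^ 2 / (2 * β) := by
  have hsplit : y - (x - (1 / β) • g) = (y - x) + (1 / β) • g := by abel
  rw [hsplit, norm_add_sq_real, real_inner_smul_right, norm_smul, real_inner_comm,
    Real.norm_eq_abs, mul_pow, sq_abs]
  field_simp
  ring

theorem stmt_7_general {n : ℕ} (S : Set (EuclideanSpace ℝ (Fin n)))
    (F : EuclideanSpace ℝ (Fin n) → ℝ)
    (gradF : EuclideanSpace ℝ (Fin n) → EuclideanSpace ℝ (Fin n))
    (β : ℝ) (hβ : 0 < β)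
    (hRSS : ∀ x ∈ S, ∀ y ∈ S,
      F y - F x - (inner ℝ (gradF x) (y - x) : ℝ) ≤ β / 2 * ‖x - y‖ ^ 2)
    (xstar : EuclideanSpace ℝ (Fin n))
    (xt : EuclideanSpace ℝ (Fin n)) (hxt : xt ∈ S)
    (ε : ℝ)
    (wt : EuclideanSpace ℝ (Fin n)) (hwt : wt = xt - (1 / β) • gradF xt)
    (xt1 : EuclideanSpace ℝ (Fin n)) (hxt1 : xt1 ∈ S)
    (hproj : ‖xt1 - wt‖ ^ 2 ≤ ‖xstar - wt‖ ^ 2 + ε) :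
    F xt1 - F xt ≤ β / 2 * ‖xstar - xt‖ ^ 2 +
      (inner ℝ (gradF xt) (xstar - xt) : ℝ) + β * ε / 2 := by
  have hupper := hRSS xt hxt xt1 hxt1
  rw [norm_sub_rev] at hupper
  subst hwt
  calc F xt1 - F xt
      ≤ inner ℝ (gradF xt) (xt1 - xt) + β / 2 * ‖xt1 - xt‖ ^ 2 := by linarith
    _ = β / 2 * ‖xt1 - (xt - (1 / β) • gradF xt)‖ ^ 2 - ‖gradF xt‖ ^ 2 / (2 * β) :=
        inner_add_half_mul_norm_sq_eq hβ.ne' _ _ _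
    _ ≤ β / 2 * (‖xstar - (xt - (1 / β) • gradF xt)‖ ^ 2 + ε) - ‖gradF xt‖ ^ 2 / (2 * β) := by
        gcongr
    _ = β / 2 * ‖xstar - xt‖ ^ 2 + inner ℝ (gradF xt) (xstar - xt) + β * ε / 2 := by
        linarith [inner_add_half_mul_norm_sq_eq hβ.ne' (gradF xt) xt xstar]

/-- under RSS and the ε-approximate projection property,
    `F(x_{t+1}) − F(x_t) ≤ (β/2)‖x* − x_t‖² + ⟨∇F(x_t), x* − x_t⟩ + βε/2`. -/
theorem stmt_7 {n : ℕ} (S : Set (EuclideanSpace ℝ (Fin n)))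
    (F : EuclideanSpace ℝ (Fin n) → ℝ)
    (gradF : EuclideanSpace ℝ (Fin n) → EuclideanSpace ℝ (Fin n))
    (hgrad : ∀ x, HasGradientAt F (gradF x) x)
    (β : ℝ) (hβ : 0 < β)
    (hRSS : ∀ x ∈ S, ∀ y ∈ S,
      F y - F x - (inner ℝ (gradF x) (y - x) : ℝ) ≤ β / 2 * ‖x - y‖ ^ 2)
    (xstar : EuclideanSpace ℝ (Fin n)) (hxstar : xstar ∈ S)
    (xt : EuclideanSpace ℝ (Fin n)) (hxt : xt ∈ S)
    (ε : ℝ) (hε : 0 ≤ ε)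
    (wt : EuclideanSpace ℝ (Fin n)) (hwt : wt = xt - (1 / β) • gradF xt)
    (xt1 : EuclideanSpace ℝ (Fin n)) (hxt1 : xt1 ∈ S)
    (hproj : ‖xt1 - wt‖ ^ 2 ≤ ‖xstar - wt‖ ^ 2 + ε) :
    F xt1 - F xt ≤ β / 2 * ‖xstar - xt‖ ^ 2 +
      (inner ℝ (gradF xt) (xstar - xt) : ℝ) + β * ε / 2 :=
  stmt_7_general S F gradF β hβ hRSS xstar xt hxt ε wt hwt xt1 hxt1 hproj
end

section
/- Let S ⊆ ℝⁿ, let F : ℝⁿ → ℝ be differentiable with gradient ∇F satisfying RSC with constant α > 0 and RSS with constant β over S, with 1 ≤ β/α < 2. Let x* ∈ S with ‖∇F(x*)‖ ≤ γ, suppose ‖x − x'‖ ≤ Δ for all x, x' ∈ S, suppose F(x) ≥ F(x*) for all x ∈ S, and let ε > 0. Let (x_t)_{t≥0} be a sequence in S such that for every t, x_{t+1} ∈ S satisfies ‖x_{t+1} − (x_t − (1/β)∇F(x_t))‖² ≤ ‖x* − (x_t − (1/β)∇F(x_t))‖² + ε. Then, with ρ = β/α − 1 ∈ [0,1) and c =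 ((β − α)/α)·γΔ + βε/2, for every T ≥ 1: F(x_T) − F(x*) ≤ ρ^T·(F(x_0) − F(x*)) + c/(1 − ρ). -/
/-!
Completing the square, `‖v - (z - β⁻¹ ∇F(z))‖²` is, up to the factor `β/2` and an additive
constant, the quadratic model `⟪∇F(z), v - z⟫ + β/2 ‖v - z‖²`, so the inexact projection `u` of
the step from `z` minimises this model over `S` up to `βε/2`. RSS bounds `F(u)` by the model at
`u`, RSC bounds the model at `x*` by `F(x*) + (β - α)/2 ‖x* - z‖²`, and RSC at `x*` together with
`‖∇F(x*)‖ ≤ γ` bounds `α/2 ‖x* - z‖²` by `F(z) - F(x*) + γΔ`. This gives the one-step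
contraction `F(u) - F(x*) ≤ ρ (F(z) - F(x*)) + c`, which is unrolled along the iterates.
-/

open RealInnerProductSpace

theorem le_pow_mul_add_div_one_sub_of_forall_succ_le {u : ℕ → ℝ} {ρ c : ℝ}
    (hρ₀ : 0 ≤ ρ) (hρ₁ : ρ < 1) (hc : 0 ≤ c) (hu : ∀ t, u (t + 1) ≤ ρ * u t + c) :
    ∀ T, u T ≤ ρ ^ T * u 0 + c / (1 - ρ) := by
  have h1ρ : 0 < 1 - ρ := sub_pos.mpr hρ₁
  intro T
  induction T with
  | zero => simpa using div_nonneg hc h1ρ.le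
  | succ T ih =>
    calc u (T + 1) ≤ ρ * u T + c := hu T
      _ ≤ ρ * (ρ ^ T * u 0 + c / (1 - ρ)) + c := by gcongr
      _ = ρ ^ (T + 1) * u 0 + c / (1 - ρ) := by field_simp; ring

section InexactGradientStep

variable {E : Type*} [NormedAddCommGroup E] [InnerProductSpace ℝ E]

def RestrictedStronglyConvexOn (S : Set E) (F : E → ℝ) (gradF : E → E) (α : ℝ) : Prop :=
  ∀ x ∈ S, ∀ y ∈ S, α / 2 * ‖x - y‖ ^ 2 ≤ F y - F x - ⟪gradF x, y - x⟫

def RestrictedStronglySmoothOn (S : Set E) (F : E → ℝ) (gradF : E → E) (β : ℝ) : Prop :=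
  ∀ x ∈ S, ∀ y ∈ S, F y - F x - ⟪gradF x, y - x⟫ ≤ β / 2 * ‖x - y‖ ^ 2

theorem inner_add_half_mul_sq_norm_sub_eq {β : ℝ} (hβ : β ≠ 0) (g z v : E) :
    ⟪g, v - z⟫ + β / 2 * ‖v - z‖ ^ 2 =
      β / 2 * ‖v - (z - (1 / β) • g)‖ ^ 2 - ‖g‖ ^ 2 / (2 * β) := by
  rw [show v - (z - (1 / β) • g) = (v - z) + (1 / β) • g by abel, norm_add_sq_real,
    real_inner_smul_right, norm_smul, mul_pow, Real.norm_eq_abs, sq_abs, real_inner_comm]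
  field_simp
  ring

theorem inner_add_half_mul_sq_norm_sub_le_of_sq_norm_sub_gradStep_le {β ε : ℝ} (hβ : 0 < β)
    {g z u s : E} (h : ‖u - (z - (1 / β) • g)‖ ^ 2 ≤ ‖s - (z - (1 / β) • g)‖ ^ 2 + ε) :
    ⟪g, u - z⟫ + β / 2 * ‖u - z‖ ^ 2 ≤ ⟪g, s - z⟫ + β / 2 * ‖s - z‖ ^ 2 + β * ε / 2 := by
  rw [inner_add_half_mul_sq_norm_sub_eq hβ.ne', inner_add_half_mul_sq_norm_sub_eq hβ.ne']
  linarith [mul_le_mul_of_nonneg_left h (half_pos hβ).le]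

variable {S : Set E} {F : E → ℝ} {gradF : E → E} {α β γ Δ ε : ℝ}

theorem sub_le_of_sq_norm_sub_gradStep_le (hα : RestrictedStronglyConvexOn S F gradF α)
    (hβ₀ : 0 < β) (hβ : RestrictedStronglySmoothOn S F gradF β) {z u s : E}
    (hz : z ∈ S) (hu : u ∈ S) (hs : s ∈ S)
    (h : ‖u - (z - (1 / β) • gradF z)‖ ^ 2 ≤ ‖s - (z - (1 / β) • gradF z)‖ ^ 2 + ε) :
    F u - F s ≤ (β - α) / 2 * ‖s - z‖ ^ 2 + β * ε / 2 := by
  have hmodel := inner_add_half_mul_sq_norm_sub_le_of_sq_norm_sub_gradStep_le hβ₀ h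
  have hsmooth := hβ z hz u hu
  have hconvex := hα z hz s hs
  rw [norm_sub_rev z u] at hsmooth
  rw [norm_sub_rev z s] at hconvex
  linarith

theorem half_mul_sq_norm_sub_le (hα : RestrictedStronglyConvexOn S F gradF α) {z s : E}
    (hz : z ∈ S) (hs : s ∈ S) (hγ : ‖gradF s‖ ≤ γ) (hΔ : ‖z - s‖ ≤ Δ) :
    α / 2 * ‖s - z‖ ^ 2 ≤ F z - F s + γ * Δ := by
  have hinner : -⟪gradF s, z - s⟫ ≤ γ * Δ :=
    calc -⟪gradF s, z - s⟫ ≤ ‖gradF s‖ * ‖z - s‖ := by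
          simpa using real_inner_le_norm (-gradF s) (z - s)
      _ ≤ γ * Δ := mul_le_mul hγ hΔ (norm_nonneg _) ((norm_nonneg _).trans hγ)
  linarith [hα s hs z hz]

theorem sub_le_mul_sub_add_of_sq_norm_sub_gradStep_le
    (hα₀ : 0 < α) (hα : RestrictedStronglyConvexOn S F gradF α)
    (hαβ : α ≤ β) (hβ : RestrictedStronglySmoothOn S F gradF β) {z u s : E}
    (hz : z ∈ S) (hu : u ∈ S) (hs : s ∈ S) (hγ : ‖gradF s‖ ≤ γ) (hΔ : ‖z - s‖ ≤ Δ)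
    (h : ‖u - (z - (1 / β) • gradF z)‖ ^ 2 ≤ ‖s - (z - (1 / β) • gradF z)‖ ^ 2 + ε) :
    F u - F s ≤ (β / α - 1) * (F z - F s) + ((β - α) / α * (γ * Δ) + β * ε / 2) := by
  have hstep := sub_le_of_sq_norm_sub_gradStep_le hα (hα₀.trans_le hαβ) hβ hz hu hs h
  have hdist := half_mul_sq_norm_sub_le hα hz hs hγ hΔ
  have hρ : 0 ≤ (β - α) / α := div_nonneg (sub_nonneg.mpr hαβ) hα₀.le
  have hscaled := mul_le_mul_of_nonneg_left hdist hρ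
  have hsplit : (β - α) / 2 * ‖s - z‖ ^ 2 = (β - α) / α * (α / 2 * ‖s - z‖ ^ 2) := by
    field_simp
  rw [mul_add] at hscaled
  rw [show β / α - 1 = (β - α) / α by field_simp]
  linarith

end InexactGradientStep

theorem stmt_9_general {n : ℕ} (S : Set (EuclideanSpace ℝ (Fin n)))
    (F : EuclideanSpace ℝ (Fin n) → ℝ)
    (gradF : EuclideanSpace ℝ (Fin n) → EuclideanSpace ℝ (Fin n))
    (α β γ Δ ε : ℝ) (hα : 0 < α) (hβ : α ≤ β) (hβα : β / α < 2)
    (hRSC : ∀ x ∈ S, ∀ y ∈ S,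
      α / 2 * ‖x - y‖ ^ 2 ≤ F y - F x - (inner ℝ (gradF x) (y - x) : ℝ))
    (hRSS : ∀ x ∈ S, ∀ y ∈ S,
      F y - F x - (inner ℝ (gradF x) (y - x) : ℝ) ≤ β / 2 * ‖x - y‖ ^ 2)
    (xstar : EuclideanSpace ℝ (Fin n)) (hxstar : xstar ∈ S)
    (hγ : ‖gradF xstar‖ ≤ γ)
    (hΔ : ∀ x ∈ S, ∀ x' ∈ S, ‖x - x'‖ ≤ Δ)
    (hε : 0 < ε)
    (x : ℕ → EuclideanSpace ℝ (Fin n)) (hxS : ∀ t, x t ∈ S)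
    (hstep : ∀ t, ‖x (t + 1) - (x t - (1 / β) • gradF (x t))‖ ^ 2 ≤
      ‖xstar - (x t - (1 / β) • gradF (x t))‖ ^ 2 + ε) :
    ∀ T : ℕ, 1 ≤ T →
      F (x T) - F xstar ≤ (β / α - 1) ^ T * (F (x 0) - F xstar) +
        (((β - α) / α) * (γ * Δ) + β * ε / 2) / (1 - (β / α - 1)) := by
  have hγ₀ : 0 ≤ γ := (norm_nonneg _).trans hγ
  have hΔ₀ : 0 ≤ Δ := (norm_nonneg _).trans (hΔ xstar hxstar xstar hxstar)
  have hρ₀ : 0 ≤ β / α - 1 := by rw [le_sub_iff_add_le, zero_add, one_le_div hα]; exact hβ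
  have hc : 0 ≤ (β - α) / α * (γ * Δ) + β * ε / 2 :=
    add_nonneg (mul_nonneg (div_nonneg (sub_nonneg.mpr hβ) hα.le) (mul_nonneg hγ₀ hΔ₀))
      (div_pos (mul_pos (hα.trans_le hβ) hε) two_pos).le
  intro T _
  exact le_pow_mul_add_div_one_sub_of_forall_succ_le (u := fun t => F (x t) - F xstar)
    hρ₀ (by linarith) hc
    (fun t => sub_le_mul_sub_add_of_sq_norm_sub_gradStep_le hα hRSC hβ hRSS (hxS t)
      (hxS (t + 1)) hxstar hγ (hΔ _ (hxS t) _ hxstar) (hstep t)) T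

/-- linear convergence of ε-PGD under RSC/RSS with `1 ≤ β/α < 2`:
    `F(x_T) − F(x*) ≤ ρ^T (F(x_0) − F(x*)) + c/(1 − ρ)` for `T ≥ 1`, where
    `ρ = β/α − 1` and `c = ((β−α)/α)γΔ + βε/2`. -/
theorem stmt_9 {n : ℕ} (S : Set (EuclideanSpace ℝ (Fin n)))
    (F : EuclideanSpace ℝ (Fin n) → ℝ)
    (gradF : EuclideanSpace ℝ (Fin n) → EuclideanSpace ℝ (Fin n))
    (hgrad : ∀ x, HasGradientAt F (gradF x) x)
    (α β γ Δ ε : ℝ) (hα : 0 < α) (hβ : α ≤ β) (hβα : β / α < 2)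
    (hRSC : ∀ x ∈ S, ∀ y ∈ S,
      α / 2 * ‖x - y‖ ^ 2 ≤ F y - F x - (inner ℝ (gradF x) (y - x) : ℝ))
    (hRSS : ∀ x ∈ S, ∀ y ∈ S,
      F y - F x - (inner ℝ (gradF x) (y - x) : ℝ) ≤ β / 2 * ‖x - y‖ ^ 2)
    (xstar : EuclideanSpace ℝ (Fin n)) (hxstar : xstar ∈ S)
    (hγ : ‖gradF xstar‖ ≤ γ)
    (hΔ : ∀ x ∈ S, ∀ x' ∈ S, ‖x - x'‖ ≤ Δ)
    (hmin : ∀ x ∈ S, F xstar ≤ F x)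
    (hε : 0 < ε)
    (x : ℕ → EuclideanSpace ℝ (Fin n)) (hxS : ∀ t, x t ∈ S)
    (hstep : ∀ t, ‖x (t + 1) - (x t - (1 / β) • gradF (x t))‖ ^ 2 ≤
      ‖xstar - (x t - (1 / β) • gradF (x t))‖ ^ 2 + ε) :
    ∀ T : ℕ, 1 ≤ T →
      F (x T) - F xstar ≤ (β / α - 1) ^ T * (F (x 0) - F xstar) +
        (((β - α) / α) * (γ * Δ) + β * ε / 2) / (1 - (β / α - 1)) :=
  stmt_9_general S F gradF α β γ Δ ε hα hβ hβα hRSC hRSS xstar hxstar hγ hΔ hε x hxS hstep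
end

section
/- Let U, V ⊆ ℝⁿ be μ-incoherent with 0 < μ < 1. Then for all u, u' ∈ U and v, v' ∈ V: |⟨u − u', v − v'⟩| ≤ (μ/(2(1 − μ)))·‖(u + v) − (u' + v')‖². -/
/-! Put `a = u - u'` and `b = v - v'`, so that `(u + v) - (u' + v') = a + b`. Incoherence gives
`⟪a, b⟫ ≥ -μ‖a‖‖b‖`, hence `‖a + b‖² ≥ ‖a‖² + ‖b‖² - 2μ‖a‖‖b‖ ≥ 2(1 - μ)‖a‖‖b‖` by AM-GM, and so
`|⟪a, b⟫| ≤ μ‖a‖‖b‖ ≤ μ/(2(1 - μ)) ‖a + b‖²`. -/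

open RealInnerProductSpace

section

variable {E : Type*} [NormedAddCommGroup E] [InnerProductSpace ℝ E]

lemma two_mul_one_sub_mul_norm_mul_norm_le_norm_add_sq {a b : E} {μ : ℝ}
    (h : -(μ * ‖a‖ * ‖b‖) ≤ ⟪a, b⟫) :
    2 * (1 - μ) * ‖a‖ * ‖b‖ ≤ ‖a + b‖ ^ 2 := by
  rw [norm_add_sq_real]
  nlinarith [sq_nonneg (‖a‖ - ‖b‖)]

lemma abs_inner_le_div_mul_norm_add_sq {a b : E} {μ : ℝ} (hμ0 : 0 ≤ μ) (hμ1 : μ < 1)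
    (h : |⟪a, b⟫| ≤ μ * ‖a‖ * ‖b‖) :
    |⟪a, b⟫| ≤ μ / (2 * (1 - μ)) * ‖a + b‖ ^ 2 := by
  have hpos : 0 < 2 * (1 - μ) := by linarith
  have hsum := two_mul_one_sub_mul_norm_mul_norm_le_norm_add_sq (abs_le.mp h).1
  rw [div_mul_eq_mul_div, le_div_iff₀ hpos]
  calc |⟪a, b⟫| * (2 * (1 - μ)) ≤ μ * (2 * (1 - μ) * ‖a‖ * ‖b‖) := by nlinarith
    _ ≤ μ * ‖a + b‖ ^ 2 := mul_le_mul_of_nonneg_left hsum hμ0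

end

/-- for μ-incoherent sets,
    `|⟨u − u', v − v'⟩| ≤ (μ/(2(1−μ)))‖(u+v) − (u'+v')‖²`. -/
theorem stmt_11 {n : ℕ} (U V : Set (EuclideanSpace ℝ (Fin n)))
    (μ : ℝ) (hμ0 : 0 < μ) (hμ1 : μ < 1)
    (hinc : ∀ u ∈ U, ∀ u' ∈ U, ∀ v ∈ V, ∀ v' ∈ V,
      |(inner ℝ (u - u') (v - v') : ℝ)| ≤ μ * ‖u - u'‖ * ‖v - v'‖) :
    ∀ u ∈ U, ∀ u' ∈ U, ∀ v ∈ V, ∀ v' ∈ V,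
      |(inner ℝ (u - u') (v - v') : ℝ)| ≤
        μ / (2 * (1 - μ)) * ‖(u + v) - (u' + v')‖ ^ 2 := by
  intro u hu u' hu' v hv v' hv'
  rw [add_sub_add_comm]
  exact abs_inner_le_div_mul_norm_add_sq hμ0.le hμ1 (hinc u hu u' hu' v hv v' hv')
end

section
/- Let U, V ⊆ ℝⁿ be μ-incoherent with 0 < μ < 1. Then for all u, u' ∈ U and v, v' ∈ V: ‖u − u'‖² + ‖v − v'‖² ≤ (1/(1 − μ))·‖(u + v) − (u' + v')‖². -/
open RealInnerProductSpace

theorem one_sub_mul_norm_sq_add_norm_sq_le_norm_add_sq {E : Type*} [NormedAddCommGroup E]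
    [InnerProductSpace ℝ E] {a b : E} {μ : ℝ} (hμ : 0 ≤ μ)
    (hab : -(μ * ‖a‖ * ‖b‖) ≤ ⟪a, b⟫) :
    (1 - μ) * (‖a‖ ^ 2 + ‖b‖ ^ 2) ≤ ‖a + b‖ ^ 2 := by
  have amgm := mul_le_mul_of_nonneg_left (two_mul_le_add_sq ‖a‖ ‖b‖) hμ
  rw [norm_add_sq_real]
  linarith

/-- for μ-incoherent sets,
    `‖u − u'‖² + ‖v − v'‖² ≤ (1/(1−μ))‖(u+v) − (u'+v')‖²`. -/
theorem stmt_12 {n : ℕ} (U V : Set (EuclideanSpace ℝ (Fin n)))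
    (μ : ℝ) (hμ0 : 0 < μ) (hμ1 : μ < 1)
    (hinc : ∀ u ∈ U, ∀ u' ∈ U, ∀ v ∈ V, ∀ v' ∈ V,
      |(inner ℝ (u - u') (v - v') : ℝ)| ≤ μ * ‖u - u'‖ * ‖v - v'‖) :
    ∀ u ∈ U, ∀ u' ∈ U, ∀ v ∈ V, ∀ v' ∈ V,
      ‖u - u'‖ ^ 2 + ‖v - v'‖ ^ 2 ≤
        1 / (1 - μ) * ‖(u + v) - (u' + v')‖ ^ 2 := by
  intro u hu u' hu' v hv v' hv'
  have key := one_sub_mul_norm_sq_add_norm_sq_le_norm_add_sq hμ0.le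
    (neg_le_of_abs_le (hinc u hu u' hu' v hv v' hv'))
  rw [add_sub_add_comm, one_div_mul_eq_div, le_div_iff₀ (sub_pos.mpr hμ1)]
  linarith
end
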